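/- Let $n,m\ge 2$ be integers, $c>0$, and $u_1,u_2>0$ with $0<u_1/c<u_2$. Then $\frac{(n-1)(m-1)}{u_1^{n-1}u_2^{m-1}}\int_{0}^{u_1/c}\int_{c v_2}^{u_1}(u_1-v_1)^{n-2}(u_2-v_2)^{m-2}\,dv_1\,dv_2 \;=\; \sum_{z=0}^{m-2}(-1)^{z}\frac{\Gamma(m)\Gamma(n)}{\Gamma(n+z+1)\,\Gamma(m-z-1)}\left(\frac{u_1}{c\,u_2}\right)^{z+1}.$ -/

import Mathlib

open Finset intervalIntegral
open scoped Nat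

/-
Integrating out `v₁` and substituting leaves `∫₀^a (a - s)^N (b - s)^M ds` with `a = u₁ / c`,
`b = u₂`. Integrating by parts against `(a - s)^N` lowers `M` by one and raises `N` by one; the
boundary term at `s = a` vanishes, so induction on `M` yields the alternating sum
`∑_z (-1)^z M! N! / ((M - z)! (N + 1 + z)!) a^(N+1+z) b^(M-z)`, and `Γ(k + 1) = k!` turns its
coefficients into the stated ones.
-/

theorem integral_sub_pow (x a : ℝ) (N : ℕ) :
    ∫ s in x..a, (a - s) ^ N = (a - x) ^ (N + 1) / (N + 1) := by
  rw [integral_comp_sub_left (fun t => t ^ N), sub_self, integral_pow]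
  simp

theorem integral_sub_pow_mul_sub_pow_succ (a b : ℝ) (N M : ℕ) :
    ∫ s in 0..a, (a - s) ^ N * (b - s) ^ (M + 1)
      = a ^ (N + 1) * b ^ (M + 1) / (N + 1)
        - (M + 1) / (N + 1) * ∫ s in 0..a, (a - s) ^ (N + 1) * (b - s) ^ M := by
  have hu : ∀ x ∈ Set.uIcc 0 a,
      HasDerivAt (fun s => (b - s) ^ (M + 1)) (-((M + 1) * (b - x) ^ M)) x := fun x _ => by
    simpa using ((hasDerivAt_id x).const_sub b).fun_pow (M + 1)
  have hv : ∀ x ∈ Set.uIcc 0 a,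
      HasDerivAt (fun s => -((a - s) ^ (N + 1) / (N + 1))) ((a - x) ^ N) x := fun x _ => by
    refine ((((hasDerivAt_id x).const_sub a).fun_pow (N + 1)).div_const ((N : ℝ) + 1)).neg
      |>.congr_deriv ?_
    simp only [id_eq, Nat.add_sub_cancel]
    push_cast
    field_simp
  have hIBP := integral_mul_deriv_eq_deriv_mul hu hv
    (by apply Continuous.intervalIntegrable; fun_prop)
    (by apply Continuous.intervalIntegrable; fun_prop)
  simp only [sub_self, sub_zero, zero_pow N.succ_ne_zero, zero_div, neg_zero, mul_zero] at hIBP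
  rw [integral_congr (g := fun s => (b - s) ^ (M + 1) * (a - s) ^ N) (fun x _ => mul_comm _ _),
    hIBP, ← integral_const_mul]
  congr 1
  · ring
  · refine integral_congr fun x _ => ?_
    field_simp

theorem integral_sub_pow_mul_sub_pow (a b : ℝ) (N M : ℕ) :
    ∫ s in 0..a, (a - s) ^ N * (b - s) ^ M
      = ∑ z ∈ range (M + 1), (-1 : ℝ) ^ z *
          ((M ! : ℝ) * N ! / ((M - z)! * (N + 1 + z)!)) * a ^ (N + 1 + z) * b ^ (M - z) := by
  induction M generalizing N with
  | zero =>
    simp [integral_sub_pow, Nat.factorial_succ, field]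
  | succ M ih =>
    rw [integral_sub_pow_mul_sub_pow_succ, ih, sum_range_succ' _ (M + 1), mul_sum,
      sub_eq_neg_add, ← sum_neg_distrib]
    congr 1
    · refine sum_congr rfl fun z hz => ?_
      rw [show N + 1 + 1 + z = N + 1 + (z + 1) by omega, show M + 1 - (z + 1) = M - z by omega]
      push_cast [Nat.factorial_succ]
      field_simp
      ring
    · push_cast [Nat.factorial_succ]
      field_simp

theorem integral_integral_sub_pow_mul_sub_pow {c : ℝ} (hc : c ≠ 0) (x y u₁ u₂ : ℝ) (N M : ℕ) :
    ∫ v in x..y, ∫ t in c * v..u₁, (u₁ - t) ^ N * (u₂ - v) ^ M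
      = c ^ (N + 1) / (N + 1) * ∫ v in x..y, (u₁ / c - v) ^ (N + 1) * (u₂ - v) ^ M := by
  rw [← integral_const_mul]
  refine integral_congr fun v _ => ?_
  rw [integral_mul_const, integral_sub_pow, show u₁ - c * v = c * (u₁ / c - v) by field_simp,
    mul_pow]
  ring

theorem Real.Gamma_natCast_succ (k : ℕ) : Real.Gamma ((k + 1 : ℕ) : ℝ) = k ! := by
  rw [Nat.cast_succ, Real.Gamma_nat_eq_factorial]

theorem umvue_double_integral_case2_general
    (n m : ℕ) (hn : 2 ≤ n) (hm : 2 ≤ m)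
    (c u₁ u₂ : ℝ) (hc : 0 < c) (hu₁ : 0 < u₁) (hu₂ : 0 < u₂) :
    ((n : ℝ) - 1) * ((m : ℝ) - 1) / (u₁ ^ (n - 1) * u₂ ^ (m - 1)) *
        ∫ v₂ in (0 : ℝ)..(u₁ / c), ∫ v₁ in (c * v₂)..u₁,
          (u₁ - v₁) ^ (n - 2) * (u₂ - v₂) ^ (m - 2)
      = ∑ z ∈ Finset.range (m - 1),
          (-1 : ℝ) ^ z *
            (Real.Gamma (m : ℝ) * Real.Gamma (n : ℝ)
              / (Real.Gamma ((n + z + 1 : ℕ) : ℝ) * Real.Gamma ((m - z - 1 : ℕ) : ℝ)))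
            * (u₁ / (c * u₂)) ^ (z + 1) := by
  obtain ⟨N, rfl⟩ : ∃ N, n = N + 1 + 1 := ⟨n - 2, by omega⟩
  obtain ⟨M, rfl⟩ : ∃ M, m = M + 1 + 1 := ⟨m - 2, by omega⟩
  simp only [Nat.add_sub_cancel, show ∀ k, k + 1 + 1 - 2 = k by omega]
  rw [integral_integral_sub_pow_mul_sub_pow hc.ne', integral_sub_pow_mul_sub_pow, mul_sum,
    mul_sum]
  refine sum_congr rfl fun z hz => ?_
  obtain ⟨w, rfl⟩ : ∃ w, M = z + w := ⟨M - z, by have := mem_range.mp hz; omega⟩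
  rw [show z + w + 1 + 1 - z - 1 = w + 1 by omega, show z + w - z = w by omega,
    show N + 1 + 1 + z = N + 1 + (z + 1) by omega, div_pow, div_pow, mul_pow, pow_add]
  simp only [Real.Gamma_natCast_succ]
  push_cast [Nat.factorial_succ]
  field_simp [hc.ne', hu₁.ne', hu₂.ne']
  ring

/-- For integers `n, m ≥ 2`, `c > 0` and `0 < u₁ / c < u₂`,
`((n-1)(m-1)/(u₁^(n-1) u₂^(m-1))) ∫₀^{u₁/c} ∫_{c v₂}^{u₁} (u₁-v₁)^(n-2) (u₂-v₂)^(m-2) dv₁ dv₂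
  = ∑_{z=0}^{m-2} (-1)^z (Γ(m)Γ(n) / (Γ(n+z+1)Γ(m-z-1))) (u₁ / (c u₂))^(z+1)`. -/
theorem umvue_double_integral_case2
    (n m : ℕ) (hn : 2 ≤ n) (hm : 2 ≤ m)
    (c u₁ u₂ : ℝ) (hc : 0 < c) (hu₁ : 0 < u₁) (hu₂ : 0 < u₂)
    (h : u₁ / c < u₂) :
    ((n : ℝ) - 1) * ((m : ℝ) - 1) / (u₁ ^ (n - 1) * u₂ ^ (m - 1)) *
        ∫ v₂ in (0 : ℝ)..(u₁ / c), ∫ v₁ in (c * v₂)..u₁,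
          (u₁ - v₁) ^ (n - 2) * (u₂ - v₂) ^ (m - 2)
      = ∑ z ∈ Finset.range (m - 1),
          (-1 : ℝ) ^ z *
            (Real.Gamma (m : ℝ) * Real.Gamma (n : ℝ)
              / (Real.Gamma ((n + z + 1 : ℕ) : ℝ) * Real.Gamma ((m - z - 1 : ℕ) : ℝ)))
            * (u₁ / (c * u₂)) ^ (z + 1) :=
  umvue_double_integral_case2_general n m hn hm c u₁ u₂ hc hu₁ hu₂
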